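/- Let M, a, s be positive integers with M > 1 such that ∑_{i=0}^{M-1} (a+i)^2 = s^2. If M = 24·m₁ + 2 for a nonnegative integer m₁, then for every integer i ≥ 1 one has m₁ ≢ (19·3^(2i-1) − 1)/8 (mod 3^(2i)) and m₁ ≢ (11·3^(2i-1) − 1)/8 (mod 3^(2i)). (For i ≥ 1 both 19·3^(2i-1) − 1 and 11·3^(2i-1) − 1 are divisible by 8, so these residues are integers.) -/

import Mathlib

/-!
Put `x = 2a + M - 1`. Summing the squares gives `12 s² = M (3x² + M² - 1)`, and for `M = 24m₁ + 2`
this becomes `(2s)² = M (x² + N)` with `N = (24m₁ + 1)(8m₁ + 1)` and `M ≡ 2 (mod 3)`. The excluded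
residues say exactly that `8m₁ + 1 = 3^(2i-1) u` with `3 ∤ u`, so `N` is divisible by an odd power
of 3. Such an equation is impossible: if `3 ∤ x` then `M (x² + N) ≡ 2 (mod 3)` is not a square,
and if `3 ∣ x` then `3 ∣ y`, and dividing by 9 lowers the exponent of 3 in `N` by two, until it
reaches 1 and divisibility by 9 fails.
-/

open Finset

theorem twelve_mul_sum_range_succ_add_sq (a n : ℕ) :
    12 * ∑ i ∈ range (n + 1), (a + i) ^ 2 = (n + 1) * (3 * (2 * a + n) ^ 2 + n * (n + 2)) := by
  induction n with
  | zero => rw [zero_add, sum_range_one]; ring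
  | succ n ih => rw [sum_range_succ, mul_add, ih]; ring

theorem mul_sq_add_ne_sq_of_not_three_dvd {M N x : ℕ} (hM : M % 3 = 2) (hN : 3 ∣ N)
    (hx : ¬ 3 ∣ x) (y : ℕ) : M * (x ^ 2 + N) ≠ y ^ 2 := by
  intro h
  have hM' : (M : ZMod 3) = 2 := by rw [← ZMod.natCast_mod, hM]; rfl
  have hN' : (N : ZMod 3) = 0 := (ZMod.natCast_eq_zero_iff N 3).2 hN
  have hx' : (x : ZMod 3) ≠ 0 := mt (ZMod.natCast_eq_zero_iff x 3).1 hx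
  have h' := congrArg (Nat.cast : ℕ → ZMod 3) h
  push_cast [hM', hN', add_zero] at h'
  exact (by decide : ∀ a b : ZMod 3, a ≠ 0 → 2 * a ^ 2 ≠ b ^ 2) _ _ hx' h'

theorem exists_mul_three_mul_sq_add_eq_three_mul_sq {M u x y j : ℕ} (hM : M % 3 = 2)
    (h : M * (x ^ 2 + 3 ^ (2 * j + 1) * u) = y ^ 2) :
    ∃ x' z, M * (3 * x' ^ 2 + 3 ^ (2 * j) * u) = 3 * z ^ 2 := by
  have hx : 3 ∣ x := by_contra fun hx ↦
    mul_sq_add_ne_sq_of_not_three_dvd hM ⟨3 ^ (2 * j) * u, by ring⟩ hx y h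
  obtain ⟨x, rfl⟩ := hx
  have hy : 3 ∣ y :=
    Nat.prime_three.dvd_of_dvd_pow ⟨M * (3 * x ^ 2 + 3 ^ (2 * j) * u), by rw [← h]; ring⟩
  obtain ⟨z, rfl⟩ := hy
  exact ⟨x, z, Nat.eq_of_mul_eq_mul_left three_pos (by linear_combination h)⟩

theorem mul_sq_add_three_pow_mul_ne_sq {M u : ℕ} (hM : M % 3 = 2) (hu : ¬ 3 ∣ u) (j : ℕ) :
    ∀ x y : ℕ, M * (x ^ 2 + 3 ^ (2 * j + 1) * u) ≠ y ^ 2 := by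
  induction j with
  | zero =>
    intro x y h
    obtain ⟨x, z, h⟩ := exists_mul_three_mul_sq_add_eq_three_mul_sq hM h
    have h3 : 3 ∣ M * (3 * x ^ 2 + u) := ⟨z ^ 2, by simpa using h⟩
    rcases Nat.prime_three.dvd_mul.1 h3 with hM3 | hu3
    · omega
    · exact hu ((Nat.dvd_add_right (dvd_mul_right 3 _)).1 hu3)
  | succ j ih =>
    intro x y h
    obtain ⟨x, z, h⟩ := exists_mul_three_mul_sq_add_eq_three_mul_sq hM h
    exact ih x z (Nat.eq_of_mul_eq_mul_left three_pos (by linear_combination h))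

theorem three_pow_two_mul_add_one_mod_eight (k : ℕ) : 3 ^ (2 * k + 1) % 8 = 3 := by
  rw [pow_succ, pow_mul, Nat.mul_mod, Nat.pow_mod]
  norm_num

theorem Nat.exists_eq_pow_mul_not_dvd_of_modEq {p n a c : ℕ} (hp : 0 < p) (hc : ¬ p ∣ c)
    (h : a ≡ c * p ^ n [MOD p ^ (n + 1)]) : ∃ u, a = p ^ n * u ∧ ¬ p ∣ u := by
  have hmod : a % p ^ (n + 1) = p ^ n * (c % p) := by
    rw [h, mul_comm c, pow_succ, Nat.mul_mod_mul_left]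
  refine ⟨p * (a / p ^ (n + 1)) + c % p, ?_, ?_⟩
  · calc a = p ^ (n + 1) * (a / p ^ (n + 1)) + a % p ^ (n + 1) := (Nat.div_add_mod _ _).symm
      _ = _ := by rw [hmod, pow_succ]; ring
  · rw [Nat.dvd_add_right (dvd_mul_right p _)]
    exact fun hd ↦ hc (Nat.dvd_of_mod_eq_zero (Nat.eq_zero_of_dvd_of_lt hd (Nat.mod_lt c hp)))

theorem exists_eight_mul_add_one_eq_three_pow_mul {m c k : ℕ} (hc8 : c % 8 = 3) (hc3 : ¬ 3 ∣ c)
    (h : m ≡ (c * 3 ^ (2 * k + 1) - 1) / 8 [MOD 3 ^ (2 * k + 1 + 1)]) :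
    ∃ u, 8 * m + 1 = 3 ^ (2 * k + 1) * u ∧ ¬ 3 ∣ u := by
  have h8 : c * 3 ^ (2 * k + 1) % 8 = 1 := by
    rw [Nat.mul_mod, hc8, three_pow_two_mul_add_one_mod_eight]
  have hm := (h.mul_left 8).add_right 1
  rw [show 8 * ((c * 3 ^ (2 * k + 1) - 1) / 8) + 1 = c * 3 ^ (2 * k + 1) by omega] at hm
  exact Nat.exists_eq_pow_mul_not_dvd_of_modEq three_pos hc3 hm

theorem sum_range_add_sq_ne_sq {m k u : ℕ} (hm : 8 * m + 1 = 3 ^ (2 * k + 1) * u) (hu : ¬ 3 ∣ u)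
    (a s : ℕ) : ∑ i ∈ range (24 * m + 2), (a + i) ^ 2 ≠ s ^ 2 := by
  intro h
  have h12 := twelve_mul_sum_range_succ_add_sq a (24 * m + 1)
  rw [show 24 * m + 1 + 1 = 24 * m + 2 from rfl, h] at h12
  have hu' : ¬ 3 ∣ (24 * m + 1) * u := by
    rw [Nat.prime_three.dvd_mul]
    omega
  refine mul_sq_add_three_pow_mul_ne_sq (M := 24 * m + 2) (by omega) hu' k
    (2 * a + 24 * m + 1) (2 * s) ?_
  refine Nat.eq_of_mul_eq_mul_left three_pos ?_
  linear_combination h12.symm + 3 * (24 * m + 2) * (24 * m + 1) * hm.symm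

theorem stmt_general (M a s m₁ : ℕ)
    (hsum : ∑ i ∈ Finset.range M, (a + i) ^ 2 = s ^ 2)
    (hMeq : M = 24 * m₁ + 2) :
    ∀ i : ℕ, 1 ≤ i →
      ¬ m₁ ≡ (19 * 3 ^ (2 * i - 1) - 1) / 8 [MOD 3 ^ (2 * i)] ∧
      ¬ m₁ ≡ (11 * 3 ^ (2 * i - 1) - 1) / 8 [MOD 3 ^ (2 * i)] := by
  subst hMeq
  intro i hi
  obtain ⟨k, rfl⟩ : ∃ k, i = k + 1 := ⟨i - 1, by omega⟩
  rw [show 2 * (k + 1) - 1 = 2 * k + 1 by omega, show 2 * (k + 1) = 2 * k + 1 + 1 by ring]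
  constructor
  all_goals
    intro h
    obtain ⟨u, hm, hu⟩ := exists_eight_mul_add_one_eq_three_pow_mul (by norm_num) (by norm_num) h
    exact sum_range_add_sq_ne_sq hm hu a s hsum

theorem stmt (M a s m₁ : ℕ) (hM : 1 < M) (ha : 1 ≤ a) (hs : 1 ≤ s)
    (hsum : ∑ i ∈ Finset.range M, (a + i) ^ 2 = s ^ 2)
    (hMeq : M = 24 * m₁ + 2) :
    ∀ i : ℕ, 1 ≤ i →
      ¬ m₁ ≡ (19 * 3 ^ (2 * i - 1) - 1) / 8 [MOD 3 ^ (2 * i)] ∧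
      ¬ m₁ ≡ (11 * 3 ^ (2 * i - 1) - 1) / 8 [MOD 3 ^ (2 * i)] :=
  stmt_general M a s m₁ hsum hMeq
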